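/- arXiv:1802.04988 — 2 statements merged into one kernel-verified Lean document; each statement's English description precedes it below -/
import Mathlib

section
/- For a sequence f of polynomial growth with Poisson transform P(z) = e^{-z}∑_{k} f(k) z^k/k!, the identity f(n) = ∑_{j≥0} (P^{(j)}(n)/j!) τ_j(n) holds, where τ_j(n) = n![z^n]((z-n)^j e^z) and P^{(j)} denotes the j-th derivative; the series converges. -/
/-!
Multiplying by `e^z` turns `P` into the exponential generating function
`g(z) = ∑ f(k) z^k / k!`, which polynomial growth makes entire, so that `f(n) = g^{(n)}(0)`.
Expanding the entire function `P` in its Taylor series at `n` gives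
`g(z) = ∑_j P^{(j)}(n)/j! · (z - n)^j e^z`, a series of entire functions dominated on every disc
by a convergent numerical series. By Weierstrass' theorem it may be differentiated `n` times
termwise at `0`, and the `j`-th term contributes `P^{(j)}(n)/j! · τ_j(n)`.
-/

open scoped Nat

open Filter Set

section TermwiseDifferentiation

variable {ι : Type*} {F : ι → ℂ → ℂ} {G : ℂ → ℂ}

theorem tendstoLocallyUniformlyOn_iteratedDeriv {l : Filter ι}
    (hF : ∀ i, Differentiable ℂ (F i)) (h : TendstoLocallyUniformlyOn F G l univ) (k : ℕ) :
    TendstoLocallyUniformlyOn (fun i => iteratedDeriv k (F i)) (iteratedDeriv k G) l univ := by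
  induction k with
  | zero => simpa using h
  | succ k ih =>
    simpa only [iteratedDeriv_succ, Function.comp_def] using ih.deriv (.of_forall fun i =>
      ((hF i).contDiff.differentiable_iteratedDeriv k (WithTop.coe_lt_top _)).differentiableOn)
      isOpen_univ

variable (hF : ∀ i, Differentiable ℂ (F i)) (hG : ∀ z, HasSum (fun i => F i z) (G z))
  (hbound : ∀ R : ℝ, ∃ u : ι → ℝ, Summable u ∧ ∀ i z, ‖z‖ ≤ R → ‖F i z‖ ≤ u i)
include hG hbound

theorem tendstoLocallyUniformlyOn_finsetSum_of_norm_le :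
    TendstoLocallyUniformlyOn (fun s z => ∑ i ∈ s, F i z) G atTop univ := by
  rw [tendstoLocallyUniformlyOn_iff_forall_isCompact isOpen_univ]
  intro K _ hK
  obtain ⟨R, hKR⟩ := hK.isBounded.subset_closedBall 0
  obtain ⟨u, hu, hFu⟩ := hbound R
  refine (tendstoUniformlyOn_tsum hu fun i z hz => hFu i z ?_).congr_right
    fun z _ => (hG z).tsum_eq
  simpa using hKR hz

include hF

theorem differentiable_of_hasSum_of_norm_le : Differentiable ℂ G :=
  differentiableOn_univ.mp <|
    (tendstoLocallyUniformlyOn_finsetSum_of_norm_le hG hbound).differentiableOn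
      (.of_forall fun _ => (Differentiable.fun_sum fun i _ => hF i).differentiableOn) isOpen_univ

theorem hasSum_iteratedDeriv_of_norm_le (k : ℕ) (z : ℂ) :
    HasSum (fun i => iteratedDeriv k (F i) z) (iteratedDeriv k G z) := by
  have hsum := (tendstoLocallyUniformlyOn_iteratedDeriv
    (fun s => Differentiable.fun_sum fun i _ => hF i)
    (tendstoLocallyUniformlyOn_finsetSum_of_norm_le hG hbound) k).tendsto_at (mem_univ z)
  refine hsum.congr fun s => ?_
  exact iteratedDeriv_fun_sum fun i _ => (hF i).contDiff.contDiffAt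

end TermwiseDifferentiation

section ExpGenFun

noncomputable def expGenFun (a : ℕ → ℂ) (z : ℂ) : ℂ := ∑' k, a k * z ^ k / (k ! : ℂ)

variable {a : ℕ → ℂ} {A B : ℝ} (ha : ∀ k, ‖a k‖ ≤ A * B ^ k)
include ha

theorem exists_summable_majorant_expGenFun_term (R : ℝ) :
    ∃ u : ℕ → ℝ, Summable u ∧ ∀ k (z : ℂ), ‖z‖ ≤ R → ‖a k * z ^ k / (k ! : ℂ)‖ ≤ u k := by
  refine ⟨fun k => A * (B * R) ^ k / k !,
    ((Real.summable_pow_div_factorial (B * R)).mul_left A).congr fun k => by ring,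
    fun k z hz => ?_⟩
  simp only [norm_div, norm_mul, norm_pow, Complex.norm_natCast, mul_pow, ← mul_assoc]
  have hAB : 0 ≤ A * B ^ k := (norm_nonneg _).trans (ha k)
  gcongr
  exact ha k

theorem hasSum_expGenFun (z : ℂ) : HasSum (fun k => a k * z ^ k / (k ! : ℂ)) (expGenFun a z) := by
  obtain ⟨u, hu, hle⟩ := exists_summable_majorant_expGenFun_term ha ‖z‖
  exact (hu.of_norm_bounded fun k => hle k z le_rfl).hasSum

theorem differentiable_expGenFun : Differentiable ℂ (expGenFun a) :=
  differentiable_of_hasSum_of_norm_le (fun k => by fun_prop) (hasSum_expGenFun ha)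
    (exists_summable_majorant_expGenFun_term ha)

theorem iteratedDeriv_expGenFun_zero (n : ℕ) : iteratedDeriv n (expGenFun a) 0 = a n := by
  have hsum := hasSum_iteratedDeriv_of_norm_le (fun k => by fun_prop) (hasSum_expGenFun ha)
    (exists_summable_majorant_expGenFun_term ha) n 0
  refine hsum.unique ?_
  simp only [iteratedDeriv_div_const, iteratedDeriv_const_mul_field, iteratedDeriv_fun_pow_zero]
  convert hasSum_ite_eq n (a n) using 2 with k
  rcases eq_or_ne k n with rfl | hkn
  · simp [Nat.factorial_ne_zero]
  · simp [hkn, hkn.symm]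

end ExpGenFun

section TaylorSeries

variable {Q : ℂ → ℂ} (hQ : Differentiable ℂ Q)
include hQ

theorem summable_norm_taylorCoeff_mul_pow (w : ℂ) {ρ : ℝ} (hρ : 0 ≤ ρ) :
    Summable fun j => ‖iteratedDeriv j Q w / (j ! : ℂ)‖ * ρ ^ j := by
  have hsum := (Complex.hasSum_taylorSeries_of_entire hQ w (w + ρ)).summable
  refine (summable_norm_iff.mpr hsum).congr fun j => ?_
  simp [abs_of_nonneg hρ, div_eq_inv_mul]
  ring

theorem hasSum_iteratedDeriv_exp_mul_taylorSeries (w z : ℂ) (n : ℕ) :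
    HasSum (fun j => iteratedDeriv j Q w / (j ! : ℂ) *
        iteratedDeriv n (fun ζ => (ζ - w) ^ j * Complex.exp ζ) z)
      (iteratedDeriv n (fun ζ => Complex.exp ζ * Q ζ) z) := by
  have hsum := hasSum_iteratedDeriv_of_norm_le
    (F := fun j ζ => iteratedDeriv j Q w / (j ! : ℂ) * ((ζ - w) ^ j * Complex.exp ζ))
    (G := fun ζ => Complex.exp ζ * Q ζ)
    (fun j => by fun_prop) (fun ζ => ?_) (fun R => ?_) n z
  · simpa only [iteratedDeriv_const_mul_field] using hsum
  · have h := (Complex.hasSum_taylorSeries_of_entire hQ w ζ).mul_left (Complex.exp ζ)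
    simpa only [smul_eq_mul, div_eq_inv_mul, mul_comm, mul_assoc, mul_left_comm] using h
  · refine ⟨fun j => ‖iteratedDeriv j Q w / (j ! : ℂ)‖ * (|R| + ‖w‖) ^ j * Real.exp |R|,
      (summable_norm_taylorCoeff_mul_pow hQ w (by positivity)).mul_right _, fun j ζ hζ => ?_⟩
    have hζw : ‖ζ - w‖ ≤ |R| + ‖w‖ := (norm_sub_le _ _).trans (by grind [le_abs_self])
    have hexp : ‖Complex.exp ζ‖ ≤ Real.exp |R| := by
      rw [Complex.norm_exp]
      exact Real.exp_le_exp.mpr ((Complex.re_le_norm ζ).trans (hζ.trans (le_abs_self R)))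
    dsimp only
    rw [norm_mul, norm_mul, norm_pow, ← mul_assoc]
    gcongr

end TaylorSeries

theorem abs_le_mul_pow_of_abs_le_mul_rpow {f : ℕ → ℝ} {C r : ℝ}
    (hf : ∀ n : ℕ, |f n| ≤ C * ((n : ℝ) + 1) ^ r) (n : ℕ) :
    |f n| ≤ C * (2 ^ max r 0) ^ n := by
  have hC : 0 ≤ C := by simpa using (abs_nonneg _).trans (hf 0)
  have hn : (1 : ℝ) ≤ n + 1 := by simp
  calc |f n| ≤ C * ((n : ℝ) + 1) ^ r := hf n
    _ ≤ C * ((n : ℝ) + 1) ^ max r 0 := by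
      gcongr
      exact le_max_left _ _
    _ ≤ C * ((2 : ℝ) ^ n) ^ max r 0 := by
      gcongr
      exact_mod_cast Nat.lt_two_pow_self
    _ = C * (2 ^ max r 0) ^ n := by rw [Real.rpow_pow_comm zero_le_two]

/-- Poisson-Charlier expansion: for a sequence `f` of polynomial growth with
(entire) Poisson transform `P`, one has `f(n) = ∑_{j≥0} P^{(j)}(n)/j! · τ_j(n)`,
where `τ_j(n) = n! [z^n]((z-n)^j e^z)`, the series being convergent. -/
theorem stmt6 (f : ℕ → ℝ) (C r : ℝ) (hf : ∀ n : ℕ, |f n| ≤ C * ((n : ℝ) + 1) ^ r)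
    (P : ℂ → ℂ)
    (hP : ∀ z : ℂ, P z = Complex.exp (-z) * ∑' k : ℕ, (f k : ℂ) * z ^ k / (k ! : ℂ))
    (τ : ℕ → ℕ → ℂ)
    (hτ : ∀ j n : ℕ, τ j n = iteratedDeriv n (fun z : ℂ => (z - (n : ℂ)) ^ j * Complex.exp z) 0)
    (n : ℕ) :
    HasSum (fun j : ℕ => iteratedDeriv j P (n : ℂ) / (j ! : ℂ) * τ j n) ((f n : ℂ)) := by
  have hgrowth (k : ℕ) : ‖(f k : ℂ)‖ ≤ C * (2 ^ max r 0) ^ k := by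
    simpa using abs_le_mul_pow_of_abs_le_mul_rpow hf k
  have hPeq : P = fun z => Complex.exp (-z) * expGenFun (fun k => (f k : ℂ)) z := funext hP
  have hexpP : (fun z => Complex.exp z * P z) = expGenFun (fun k => (f k : ℂ)) := by
    funext z
    rw [hPeq, ← mul_assoc, ← Complex.exp_add, add_neg_cancel, Complex.exp_zero, one_mul]
  have hPdiff : Differentiable ℂ P :=
    hPeq ▸ (Complex.differentiable_exp.comp differentiable_neg).mul
      (differentiable_expGenFun hgrowth)
  simpa only [hτ, hexpP, iteratedDeriv_expGenFun_zero hgrowth] using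
    hasSum_iteratedDeriv_exp_mul_taylorSeries hPdiff n 0 n
end

section
/- Let f : ℕ → ℝ satisfy f(k) = O(k^c) for some c < -1 with f(0) ≠ 0 allowed. Then the Newton series ψ(s) = ∑_{k≥0} (-1)^k (f(k)/k!) s(s-1)⋯(s-k+1) converges for all s with Re s > c, and ψ(n) = ∑_{k=0}^n (-1)^k C(n,k) f(k) for every natural number n; thus ψ is an analytic lifting of the binomial transform Π[f]. -/
/-!
The generalized binomial coefficient `∏_{i<k} (s - i) / k!` equals
`(-1)^k k^(-s) / ((k - s) Γₖ(-s))`, where `Γₖ = Complex.GammaSeq` is the sequence of Euler's limit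
formula `Γₖ(-s) → Γ(-s)`. For `s ∉ ℕ` that limit is nonzero, so the coefficient is
`O(k^(-Re s - 1))` and the Newton series is dominated by `∑ k^(c - Re s - 1)`, which converges
for `Re s > c`. For `s = n ∈ ℕ` the coefficients are `C(n, k)` for `k ≤ n` and vanish beyond, so the
series is the finite binomial transform.
-/

open scoped Nat

open Filter Asymptotics Finset

lemma prod_range_natCast_sub_eq_zero {n k : ℕ} (h : n < k) :
    ∏ i ∈ range k, ((n : ℂ) - i) = 0 :=
  prod_eq_zero (mem_range.mpr h) (sub_self _)

lemma prod_range_natCast_sub_div_factorial {n k : ℕ} (h : k ≤ n) :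
    (∏ i ∈ range k, ((n : ℂ) - i)) / k ! = n.choose k := by
  have hdesc : (∏ i ∈ range k, ((n : ℂ) - i)) = n.descFactorial k := by
    rw [Nat.descFactorial_eq_prod_range, Nat.cast_prod]
    exact prod_congr rfl fun i hi => by
      rw [Nat.cast_sub (by have := mem_range.mp hi; omega)]
  rw [hdesc, Nat.descFactorial_eq_factorial_mul_choose, Nat.cast_mul,
    mul_div_cancel_left₀ _ (Nat.cast_ne_zero.mpr k.factorial_ne_zero)]

lemma neg_add_mul_GammaSeq_mul_prod_range_sub_div_factorial {s : ℂ} (hs : ∀ n : ℕ, s ≠ n)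
    (k : ℕ) :
    (-s + k) * Complex.GammaSeq (-s) k * ((∏ i ∈ range k, (s - i)) / k !) =
      (-1) ^ k * (k : ℂ) ^ (-s) := by
  have hneg : ∏ j ∈ range k, (-s + j) = (-1) ^ k * ∏ i ∈ range k, (s - i) := by
    simp only [neg_add_eq_sub, ← neg_sub s, prod_neg, card_range]
  have hprod : ∏ i ∈ range k, (s - i) ≠ 0 :=
    prod_ne_zero_iff.mpr fun i _ => sub_ne_zero.mpr (hs i)
  have hk : -s + k ≠ 0 := fun h => hs k (by linear_combination -h)
  have hfac : (k ! : ℂ) ≠ 0 := Nat.cast_ne_zero.mpr k.factorial_ne_zero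
  rw [Complex.GammaSeq, prod_range_succ, hneg]
  field_simp
  rw [← pow_mul, pow_mul', neg_one_sq, one_pow, mul_one]

lemma isBigO_inv_add_natCast (z : ℂ) :
    (fun k : ℕ => (z + k)⁻¹) =O[atTop] fun k => (k : ℝ) ^ (-1 : ℝ) := by
  refine IsBigO.of_bound 2 ?_
  filter_upwards [tendsto_natCast_atTop_atTop.eventually_ge_atTop (2 * ‖z‖ + 1)] with k hk
  have htri : (k : ℝ) ≤ ‖z + k‖ + ‖z‖ := by
    simpa using norm_add_le (z + k) (-z)
  rw [norm_inv, Real.rpow_neg_one, Real.norm_of_nonneg (by positivity)]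
  calc ‖z + k‖⁻¹ ≤ ((k : ℝ) / 2)⁻¹ :=
        inv_anti₀ (by linarith [norm_nonneg z]) (by linarith [norm_nonneg z])
    _ = 2 * (k : ℝ)⁻¹ := by rw [inv_div, div_eq_mul_inv]

lemma isBigO_prod_range_sub_div_factorial (s : ℂ) :
    (fun k : ℕ => (∏ i ∈ range k, (s - i)) / k !) =O[atTop] fun k => (k : ℝ) ^ (-s.re - 1) := by
  by_cases hs : ∃ n : ℕ, s = n
  · obtain ⟨n, rfl⟩ := hs
    refine (isBigO_zero _ _).congr' ?_ EventuallyEq.rfl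
    filter_upwards [eventually_gt_atTop n] with k hk
    rw [prod_range_natCast_sub_eq_zero hk, zero_div]
  push Not at hs
  have hGamma : Complex.Gamma (-s) ≠ 0 :=
    Complex.Gamma_ne_zero fun m h => hs m (neg_inj.mp h)
  have hpow : (fun k : ℕ => (-1 : ℂ) ^ k * (k : ℂ) ^ (-s)) =O[atTop]
      fun k => (k : ℝ) ^ (-s.re) := by
    refine IsBigO.of_bound 1 ?_
    filter_upwards [eventually_gt_atTop 0] with k hk
    rw [norm_mul, norm_pow, norm_neg, norm_one, one_pow, one_mul,
      Complex.norm_natCast_cpow_of_pos hk, Complex.neg_re, Real.norm_of_nonneg (by positivity),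
      one_mul]
  have hinv : (fun k => (Complex.GammaSeq (-s) k)⁻¹) =O[atTop] fun _ => (1 : ℝ) :=
    ((Complex.GammaSeq_tendsto_Gamma (-s)).inv₀ hGamma).isBigO_one ℝ
  refine ((hpow.mul (isBigO_inv_add_natCast (-s))).mul hinv).congr' ?_ ?_
  · filter_upwards [eventually_gt_atTop 0] with k hk
    have key := neg_add_mul_GammaSeq_mul_prod_range_sub_div_factorial hs k
    have hX : -s + k ≠ 0 := fun h => hs k (by linear_combination -h)
    have hG : Complex.GammaSeq (-s) k ≠ 0 := fun hG => by simp [hG, hk.ne'] at key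
    rw [← key]
    field_simp
  · filter_upwards [eventually_gt_atTop 0] with k hk
    rw [mul_one, ← Real.rpow_add (by positivity), sub_eq_add_neg]

lemma isBigO_ofReal_rpow_of_abs_le {f : ℕ → ℝ} {c K : ℝ}
    (hf : ∀ k : ℕ, |f k| ≤ K * ((k : ℝ) + 1) ^ c) :
    (fun k => (f k : ℂ)) =O[atTop] fun k : ℕ => (k : ℝ) ^ c := by
  have hshift : (fun k : ℕ => ((k : ℝ) + 1) ^ c) =O[atTop] fun k : ℕ => (k : ℝ) ^ c :=
    ((IsEquivalent.refl.add_const_of_norm_tendsto_atTop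
      (tendsto_norm_atTop_atTop.comp tendsto_natCast_atTop_atTop)).isTheta.rpow
      (Eventually.of_forall fun k => by positivity)
      (Eventually.of_forall fun k => by positivity)).isBigO
  refine (IsBigO.of_bound K (Eventually.of_forall fun k => ?_)).trans hshift
  rw [Complex.norm_real, Real.norm_eq_abs, Real.norm_of_nonneg (by positivity)]
  exact hf k

theorem summable_newtonSeries {a : ℕ → ℂ} {c : ℝ} (ha : a =O[atTop] fun k : ℕ => (k : ℝ) ^ c)
    {s : ℂ} (hs : c < s.re) :
    Summable fun k : ℕ => (-1 : ℂ) ^ k * (a k / k !) * ∏ i ∈ range k, (s - i) := by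
  have hsign : (fun k : ℕ => (-1 : ℂ) ^ k) =O[atTop] fun _ => (1 : ℝ) :=
    IsBigO.of_bound 1 (by simp)
  refine summable_of_isBigO_nat
    (Real.summable_nat_rpow.mpr (by linarith : c + (-s.re - 1) < -1)) ?_
  refine ((hsign.mul ha).mul (isBigO_prod_range_sub_div_factorial s)).congr' ?_ ?_
  · filter_upwards with k
    ring
  · filter_upwards [eventually_gt_atTop 0] with k hk
    rw [one_mul, ← Real.rpow_add (by positivity)]

theorem stmt7_general (f : ℕ → ℝ) (c K : ℝ)
    (hf : ∀ k : ℕ, |f k| ≤ K * ((k : ℝ) + 1) ^ c) :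
    (∀ s : ℂ, c < s.re →
      Summable (fun k : ℕ =>
        (-1 : ℂ) ^ k * ((f k : ℂ) / (k ! : ℂ)) * ∏ i ∈ Finset.range k, (s - (i : ℂ)))) ∧
    (∀ n : ℕ,
      (∑' k : ℕ, (-1 : ℂ) ^ k * ((f k : ℂ) / (k ! : ℂ)) *
          ∏ i ∈ Finset.range k, ((n : ℂ) - (i : ℂ))) =
        ∑ k ∈ Finset.range (n + 1), (-1 : ℂ) ^ k * (n.choose k) * (f k : ℂ)) := by
  refine ⟨fun s hs => summable_newtonSeries (isBigO_ofReal_rpow_of_abs_le hf) hs, fun n => ?_⟩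
  rw [tsum_eq_sum fun k hk => ?_]
  · refine sum_congr rfl fun k hk => ?_
    rw [← prod_range_natCast_sub_div_factorial (Nat.lt_succ_iff.mp (mem_range.mp hk))]
    ring
  · rw [prod_range_natCast_sub_eq_zero (by simpa using hk), mul_zero]

/-- Nörlund-Rice: for a sequence `f` with `f(k) = O(k^c)`, `c < -1`, the Newton
interpolation series `ψ(s) = ∑_k (-1)^k (f(k)/k!) s(s-1)⋯(s-k+1)` converges for
`Re s > c`, and at natural numbers `ψ(n) = ∑_{k=0}^n (-1)^k C(n,k) f(k) = Π[f](n)`. -/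
theorem stmt7 (f : ℕ → ℝ) (c K : ℝ) (hc : c < -1)
    (hf : ∀ k : ℕ, |f k| ≤ K * ((k : ℝ) + 1) ^ c) :
    (∀ s : ℂ, c < s.re →
      Summable (fun k : ℕ =>
        (-1 : ℂ) ^ k * ((f k : ℂ) / (k ! : ℂ)) * ∏ i ∈ Finset.range k, (s - (i : ℂ)))) ∧
    (∀ n : ℕ,
      (∑' k : ℕ, (-1 : ℂ) ^ k * ((f k : ℂ) / (k ! : ℂ)) *
          ∏ i ∈ Finset.range k, ((n : ℂ) - (i : ℂ))) =
        ∑ k ∈ Finset.range (n + 1), (-1 : ℂ) ^ k * (n.choose k) * (f k : ℂ)) :=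
  stmt7_general f c K hf
end
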